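/- arXiv:1310.5088 — 5 statements merged into one kernel-verified Lean document; each statement's English description precedes it below -/
import Mathlib

section
/- A nonzero entire function f (restricted to the reals) that is completely monotone on (0,∞) (i.e. (-1)^n f^{(n)}(x) ≥ 0 for all x > 0 and all n ≥ 0) is strictly positive at every real number. -/
/-!
The derivatives of `F` at real points are those of `f`, so at every `c > 0` the Taylor
coefficients of the entire function `F` alternate in sign; summing its Taylor series at `c`
gives `f c ≤ f x` for all `x ≤ c`. It remains to see `f c > 0` for `c > 0`: `f` is nonnegative
and nonincreasing on `(0, ∞)`, so `f c = 0` forces `f = 0` on `[c, ∞)`, hence `F = 0` by the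
identity theorem.
-/

open Complex Set
open scoped ComplexOrder

def CompletelyMonotoneOn (f : ℝ → ℝ) (s : Set ℝ) : Prop :=
  ∀ n : ℕ, ∀ x ∈ s, 0 ≤ (-1 : ℝ) ^ n * iteratedDeriv n f x

namespace CompletelyMonotoneOn

variable {f : ℝ → ℝ} {s : Set ℝ}

theorem nonneg (hf : CompletelyMonotoneOn f s) {x : ℝ} (hx : x ∈ s) : 0 ≤ f x := by
  simpa using hf 0 x hx

theorem deriv_nonpos (hf : CompletelyMonotoneOn f s) {x : ℝ} (hx : x ∈ s) : deriv f x ≤ 0 := by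
  simpa using hf 1 x hx

theorem antitoneOn (hf : CompletelyMonotoneOn f s) (hs : Convex ℝ s)
    (hd : DifferentiableOn ℝ f s) : AntitoneOn f s :=
  antitoneOn_of_deriv_nonpos hs hd.continuousOn (hd.mono interior_subset)
    fun _ hx => hf.deriv_nonpos (interior_subset hx)

theorem eq_zero_of_apply_eq_zero (hf : CompletelyMonotoneOn f s) (hs : Convex ℝ s)
    (hd : DifferentiableOn ℝ f s) {b : ℝ} (hb : b ∈ s) (hfb : f b = 0) {x : ℝ} (hx : x ∈ s)
    (hbx : b ≤ x) : f x = 0 :=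
  le_antisymm (hfb ▸ hf.antitoneOn hs hd hb hx hbx) (hf.nonneg hx)

end CompletelyMonotoneOn

section RealRestriction

variable {F : ℂ → ℂ} {f : ℝ → ℝ} {s : Set ℝ}

theorem Complex.hasDerivAt_re_deriv (hF : Differentiable ℂ F) (hFf : ∀ x : ℝ, F x = f x)
    (x : ℝ) : HasDerivAt f (deriv F x).re x := by
  have hf : f = fun y : ℝ => (F y).re := funext fun y => by rw [hFf, ofReal_re]
  exact hf ▸ (hF x).hasDerivAt.real_of_complex

theorem Complex.deriv_eq_ofReal_deriv (hF : Differentiable ℂ F) (hFf : ∀ x : ℝ, F x = f x)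
    (x : ℝ) : deriv F x = deriv f x := by
  have hC : HasDerivAt (fun y : ℝ => (f y : ℂ)) (deriv F x) x := by
    simpa only [hFf] using (hF x).hasDerivAt.comp_ofReal
  have hR := hasDerivAt_re_deriv hF hFf x
  rw [hC.unique hR.ofReal_comp, hR.deriv]

theorem Complex.iteratedDeriv_eq_ofReal_iteratedDeriv (hF : Differentiable ℂ F)
    (hFf : ∀ x : ℝ, F x = f x) (n : ℕ) (x : ℝ) : iteratedDeriv n F x = iteratedDeriv n f x := by
  induction n generalizing x with
  | zero => simpa using hFf x
  | succ n ih =>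
    rw [iteratedDeriv_succ, iteratedDeriv_succ]
    exact deriv_eq_ofReal_deriv (hF.contDiff.differentiable_iteratedDeriv' n) ih x

theorem Differentiable.eq_zero_of_forall_ofReal_gt (hF : Differentiable ℂ F) {a : ℝ}
    (h : ∀ x : ℝ, a < x → F x = 0) : F = 0 := by
  have hmaps : MapsTo ((↑) : ℝ → ℂ) (Ioi a) {(a : ℂ)}ᶜ := fun x hx => by
    simpa using hx.ne'
  have hfreq : ∃ᶠ z in nhdsWithin (a : ℂ) {(a : ℂ)}ᶜ, F z = 0 :=
    (continuous_ofReal.continuousWithinAt.tendsto_nhdsWithin hmaps).frequently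
      (eventually_nhdsWithin_of_forall (s := Ioi a) h).frequently
  exact (analyticOnNhd_univ_iff_differentiable.mpr hF).eq_of_frequently_eq
    analyticOnNhd_const hfreq

theorem CompletelyMonotoneOn.apply_le_of_le (hf : CompletelyMonotoneOn f s)
    (hF : Differentiable ℂ F) (hFf : ∀ x : ℝ, F x = f x) {c x : ℝ} (hc : c ∈ s) (hxc : x ≤ c) :
    f c ≤ f x := by
  have hderiv (n : ℕ) (_ : n ≠ 0) : 0 ≤ (-1) ^ n * iteratedDeriv n F c := by
    rw [iteratedDeriv_eq_ofReal_iteratedDeriv hF hFf]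
    exact_mod_cast hf n c hc
  have hle := hF.apply_le_of_iteratedDeriv_alternating hderiv (z := x) (c := c) (mod_cast hxc)
  rwa [hFf, hFf, real_le_real] at hle

end RealRestriction

/-- A nonzero entire function (restricted to ℝ) that is completely monotone on (0,∞)
is strictly positive at every real number. -/
theorem stmt0 (f : ℝ → ℝ) (F : ℂ → ℂ)
    (hF : Differentiable ℂ F)
    (hFf : ∀ x : ℝ, F x = (f x : ℂ))
    (hne : f ≠ 0)
    (hcm : ∀ (n : ℕ), ∀ x : ℝ, 0 < x → 0 ≤ (-1 : ℝ) ^ n * iteratedDeriv n f x) :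
    ∀ x : ℝ, 0 < f x := by
  intro x
  have hcm' : CompletelyMonotoneOn f (Ioi 0) := hcm
  have hd : Differentiable ℝ f := fun y => (hasDerivAt_re_deriv hF hFf y).differentiableAt
  set c := max x 0 + 1
  have hc : 0 < c := by positivity
  have hfc : 0 < f c := by
    refine (hcm'.nonneg hc).lt_of_ne' fun hfc => hne ?_
    have hF0 : F = 0 := hF.eq_zero_of_forall_ofReal_gt fun y hy => by
      rw [hFf, hcm'.eq_zero_of_apply_eq_zero (convex_Ioi 0) hd.differentiableOn hc hfc
        (hc.trans hy) hy.le, ofReal_zero]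
    funext y
    simpa [hF0] using (hFf y).symm
  exact hfc.trans_le (hcm'.apply_le_of_le hF hFf hc (by linarith [le_max_left x 0]))
end

section
/- For real numbers a_0, …, a_m, the inequality ∑_{i=0}^m a_i φ(i) ≥ 0 holds for every convex function φ : ℝ → ℝ if and only if (i) ∑_{i=0}^m a_i = 0, (ii) ∑_{i=0}^m i·a_i = 0, and (iii) ∑_{j=0}^k ∑_{i=0}^j a_i ≥ 0 for every 0 ≤ k ≤ m. -/
/-!
Two Abel summations write `∑ aᵢ φ(i)` as `A_m φ(m+1) - T_m (φ(m+2) - φ(m+1)) + ∑_{k ≤ m} T_k Δ²φ(k)`,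
where `A` and `T` are the first and second partial sums of `a` and `Δ²φ(k) ≥ 0` by convexity.
Conditions (i) and (ii) say exactly `A_m = T_m = 0`, which gives sufficiency. Conversely,
testing against `±1` and `±x` gives (i) and (ii), and the hinge `x ↦ max (k + 1 - x) 0`
picks out `T_k`, giving (iii).
-/

open Finset

theorem ConvexOn.sub_two_mul_add_nonneg {φ : ℝ → ℝ} (hφ : ConvexOn ℝ Set.univ φ) (x h : ℝ) :
    0 ≤ φ x - 2 * φ (x + h) + φ (x + 2 * h) := by
  have h_mid := hφ.2 (Set.mem_univ x) (Set.mem_univ (x + 2 * h))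
    (by norm_num : (0 : ℝ) ≤ 1 / 2) (by norm_num : (0 : ℝ) ≤ 1 / 2) (by norm_num)
  simp only [smul_eq_mul] at h_mid
  rw [show 1 / 2 * x + 1 / 2 * (x + 2 * h) = x + h by ring] at h_mid
  linarith

theorem convexOn_max_sub_zero (c : ℝ) : ConvexOn ℝ Set.univ fun x : ℝ => max (c - x) 0 :=
  ((convexOn_const c convex_univ).sub (concaveOn_id convex_univ)).sup
    (convexOn_const 0 convex_univ)

section CommRing

variable {R : Type*} [CommRing R]

theorem sum_partialSums_eq_sum_sub_mul (a : ℕ → R) (n : ℕ) :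
    ∑ j ∈ range n, ∑ i ∈ range (j + 1), a i = ∑ i ∈ range n, ((n : R) - i) * a i := by
  induction n with
  | zero => simp
  | succ n ih =>
    have h_shift : ∑ i ∈ range n, ((n : R) + 1 - i) * a i =
        ∑ i ∈ range n, ((n : R) - i) * a i + ∑ i ∈ range n, a i := by
      rw [← sum_add_distrib]
      exact sum_congr rfl fun i _ => by ring
    rw [sum_range_succ, ih, Nat.cast_succ, sum_range_succ (fun i => ((n : R) + 1 - i) * a i),
      h_shift, sum_range_succ a n]
    ring

/-- Abel summation applied twice. -/
theorem sum_range_mul_eq_sum_mul_secondDiff (a f : ℕ → R) (n : ℕ) :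
    ∑ i ∈ range n, a i * f i =
      (∑ i ∈ range n, a i) * f n
        - (∑ j ∈ range n, ∑ i ∈ range (j + 1), a i) * (f (n + 1) - f n)
        + ∑ k ∈ range n, (∑ j ∈ range (k + 1), ∑ i ∈ range (j + 1), a i)
            * (f k - 2 * f (k + 1) + f (k + 2)) := by
  induction n with
  | zero => simp
  | succ n ih =>
    rw [sum_range_succ (fun i => a i * f i), sum_range_succ (fun k =>
        (∑ j ∈ range (k + 1), ∑ i ∈ range (j + 1), a i) * (f k - 2 * f (k + 1) + f (k + 2))),
      sum_range_succ (fun j => ∑ i ∈ range (j + 1), a i), sum_range_succ a]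
    linear_combination ih

end CommRing

theorem sum_range_mul_max_sub_zero (a : ℕ → ℝ) {k m : ℕ} (hk : k ≤ m) :
    ∑ i ∈ range (m + 1), a i * max ((k + 1 : ℕ) - (i : ℝ)) 0 =
      ∑ j ∈ range (k + 1), ∑ i ∈ range (j + 1), a i := by
  rw [sum_partialSums_eq_sum_sub_mul,
    ← sum_subset (range_subset_range.2 (by omega : k + 1 ≤ m + 1))]
  · refine sum_congr rfl fun i hi => ?_
    rw [max_eq_left, mul_comm]
    have : i < k + 1 := mem_range.1 hi
    rw [sub_nonneg]; exact_mod_cast this.le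
  · intro i _ hi
    rw [max_eq_right, mul_zero]
    have : k + 1 ≤ i := by simpa using hi
    rw [sub_nonpos]; exact_mod_cast this

/-- Karlin–Novikoff: ∑ aᵢ φ(i) ≥ 0 for all convex φ iff the three conditions hold. -/
theorem stmt2 (m : ℕ) (a : ℕ → ℝ) :
    (∀ φ : ℝ → ℝ, ConvexOn ℝ Set.univ φ →
      0 ≤ ∑ i ∈ Finset.range (m + 1), a i * φ i) ↔
    ((∑ i ∈ Finset.range (m + 1), a i = 0) ∧
     (∑ i ∈ Finset.range (m + 1), (i : ℝ) * a i = 0) ∧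
     (∀ k ≤ m, 0 ≤ ∑ j ∈ Finset.range (k + 1), ∑ i ∈ Finset.range (j + 1), a i)) := by
  constructor
  · intro h
    have h_affine : ∀ φ : ℝ → ℝ, ConvexOn ℝ Set.univ φ → ConcaveOn ℝ Set.univ φ →
        ∑ i ∈ range (m + 1), a i * φ i = 0 := fun φ hvex hcave =>
      le_antisymm (by simpa using h (-φ) (neg_convexOn_iff.2 hcave)) (h φ hvex)
    refine ⟨by simpa using
        h_affine _ (convexOn_const 1 convex_univ) (concaveOn_const 1 convex_univ),
      by simpa [mul_comm] using h_affine _ (convexOn_id convex_univ) (concaveOn_id convex_univ),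
      fun k hk => ?_⟩
    rw [← sum_range_mul_max_sub_zero a hk]
    exact h _ (convexOn_max_sub_zero _)
  · rintro ⟨h_sum, h_moment, h_double⟩ φ hφ
    have h_last : ∑ j ∈ range (m + 1), ∑ i ∈ range (j + 1), a i = 0 := by
      rw [sum_partialSums_eq_sum_sub_mul]
      simp only [sub_mul, sum_sub_distrib, ← mul_sum, h_sum, h_moment]
      ring
    rw [sum_range_mul_eq_sum_mul_secondDiff a (fun i => φ i), h_sum, h_last, zero_mul, zero_mul,
      sub_zero, zero_add]
    refine sum_nonneg fun k hk => mul_nonneg (h_double k (by simpa [Nat.lt_succ_iff] using hk)) ?_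
    simpa [add_assoc, one_add_one_eq_two] using hφ.sub_two_mul_add_nonneg k 1
end

section
/- Let a_0, …, a_d be real numbers, not all zero. Then ∑_{i=0}^d a_i φ(i) ≥ 0 holds for every convex sequence (φ(i)) if and only if the polynomial p(t) = ∑_{i=0}^d a_i t^i has a root of multiplicity at least 2 at t = 1 and all coefficients of the quotient polynomial p(t)/(t-1)^2 are nonnegative. -/
/-!
Pair a polynomial `p = ∑ cₙ Xⁿ` with a sequence `φ` as `∑ cₙ φ(n)`. Under this pairing,
multiplication by `(X - 1)²` is adjoint to the second difference `Δ²φ(k) = φ(k+2) - 2φ(k+1) + φ(k)`,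
so for `p = (X - 1)² q` the pairing equals `∑ q_k Δ²φ(k)`, which is nonnegative when `q` has
nonnegative coefficients. Conversely, affine sequences and their negatives are both convex, so the
pairing vanishes on `1` and on `n ↦ n`, i.e. `p(1) = p'(1) = 0`. The ramp `(i - k - 1)₊` has
`Δ² = δ_k`, and testing against it extracts the coefficient `q_k`.
-/

open Polynomial Finset

section Sequences

variable {R : Type*} [CommRing R]

def secondDiff (φ : ℕ → R) (i : ℕ) : R :=
  φ (i + 2) - 2 * φ (i + 1) + φ i

theorem secondDiff_neg (φ : ℕ → R) : secondDiff (-φ) = -secondDiff φ := by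
  funext i
  simp only [secondDiff, Pi.neg_apply]
  ring

/-- Truncated subtraction makes this `i ↦ max (i - k - 1) 0`. -/
def ramp (k : ℕ) (i : ℕ) : R := ((i - (k + 1) : ℕ) : R)

theorem secondDiff_ramp (k : ℕ) : secondDiff (ramp k : ℕ → R) = Pi.single k 1 := by
  funext i
  simp only [secondDiff, ramp, Pi.single_apply]
  rcases lt_trichotomy i k with h | rfl | h
  · rw [if_neg h.ne, Nat.sub_eq_zero_of_le (by omega), Nat.sub_eq_zero_of_le (by omega),
      Nat.sub_eq_zero_of_le (by omega)]
    simp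
  · rw [if_pos rfl, show i + 2 - (i + 1) = 1 by omega, Nat.sub_eq_zero_of_le (by omega),
      Nat.sub_eq_zero_of_le (by omega)]
    simp
  · rw [if_neg h.ne', show i + 2 - (k + 1) = i - (k + 1) + 2 by omega,
      show i + 1 - (k + 1) = i - (k + 1) + 1 by omega]
    push_cast
    ring

end Sequences

namespace Polynomial

section CommRing

variable {R : Type*} [CommRing R]

theorem sq_X_sub_C_dvd_of_isRoot_derivative {p : R[X]} {t : R} (h : p.IsRoot t)
    (h' : (derivative p).IsRoot t) : (X - C t) ^ 2 ∣ p := by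
  rcases eq_or_ne p 0 with rfl | hp
  · exact dvd_zero _
  · exact (le_rootMultiplicity_iff hp).1 ((one_lt_rootMultiplicity_iff_isRoot hp).2 ⟨h, h'⟩)

noncomputable def coeffPairing (φ : ℕ → R) : R[X] →ₗ[R] R :=
  lsum fun n => LinearMap.mulRight R (φ n)

variable {φ : ℕ → R}

theorem coeffPairing_apply (p : R[X]) : coeffPairing φ p = p.sum fun n c => c * φ n :=
  rfl

theorem coeffPairing_C_mul_X_pow (n : ℕ) (c : R) : coeffPairing φ (C c * X ^ n) = c * φ n := by
  rw [C_mul_X_pow_eq_monomial, coeffPairing_apply, sum_monomial_index c _ (zero_mul _)]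

theorem coeffPairing_sum_C_mul_X_pow (d : ℕ) (a : ℕ → R) :
    coeffPairing φ (∑ i ∈ range (d + 1), C (a i) * X ^ i) = ∑ i ∈ range (d + 1), a i * φ i := by
  simp only [map_sum, coeffPairing_C_mul_X_pow]

theorem coeffPairing_neg (p : R[X]) : coeffPairing (-φ) p = -coeffPairing φ p := by
  simp [coeffPairing_apply, sum_def]

theorem coeffPairing_one (p : R[X]) : coeffPairing 1 p = p.eval 1 := by
  simp [coeffPairing_apply, eval_eq_sum]

theorem coeffPairing_natCast (p : R[X]) :
    coeffPairing (fun n => (n : R)) p = (derivative p).eval 1 := by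
  simp [coeffPairing_apply, derivative_eval]

theorem coeffPairing_single (k : ℕ) (p : R[X]) : coeffPairing (Pi.single k 1) p = p.coeff k := by
  rw [coeffPairing_apply, sum_def]
  simp only [Pi.single_apply, mul_ite, mul_one, mul_zero, sum_ite_eq']
  split_ifs with hk
  · rfl
  · exact (notMem_support_iff.1 hk).symm

theorem coeffPairing_sq_X_sub_one_mul (q : R[X]) :
    coeffPairing φ ((X - 1) ^ 2 * q) = coeffPairing (secondDiff φ) q := by
  induction q using Polynomial.induction_on' with
  | add p q hp hq => rw [mul_add, map_add, map_add, hp, hq]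
  | monomial n c =>
    have hexpand : (X - 1 : R[X]) ^ 2 * monomial n c
        = C c * X ^ (n + 2) - C (2 * c) * X ^ (n + 1) + C c * X ^ n := by
      rw [← C_mul_X_pow_eq_monomial, C_mul, map_ofNat C 2]
      ring
    rw [hexpand, ← C_mul_X_pow_eq_monomial, map_add, map_sub, coeffPairing_C_mul_X_pow,
      coeffPairing_C_mul_X_pow, coeffPairing_C_mul_X_pow, coeffPairing_C_mul_X_pow, secondDiff]
    ring

end CommRing

section OrderedRing

variable {R : Type*} [CommRing R] [PartialOrder R] [IsOrderedRing R]

theorem coeffPairing_nonneg {φ : ℕ → R} (hφ : ∀ i, 0 ≤ φ i) {p : R[X]}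
    (hp : ∀ k, 0 ≤ p.coeff k) : 0 ≤ coeffPairing φ p := by
  rw [coeffPairing_apply, sum_def]
  exact sum_nonneg fun n _ => mul_nonneg (hp n) (hφ n)

theorem forall_convex_coeffPairing_nonneg_iff (p : R[X]) :
    (∀ φ : ℕ → R, (∀ i, 0 ≤ secondDiff φ i) → 0 ≤ coeffPairing φ p) ↔
      (X - 1) ^ 2 ∣ p ∧ ∀ k, 0 ≤ (p /ₘ (X - 1) ^ 2).coeff k := by
  have hmonic : ((X - 1 : R[X]) ^ 2).Monic := by simpa using (monic_X_sub_C (1 : R)).pow 2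
  constructor
  · intro h
    have affine (φ : ℕ → R) (hφ : secondDiff φ = 0) : coeffPairing φ p = 0 := by
      refine le_antisymm ?_ (h φ fun i => by rw [hφ]; rfl)
      have := h (-φ) fun i => by rw [secondDiff_neg, hφ, neg_zero]; rfl
      rwa [coeffPairing_neg, neg_nonneg] at this
    have hroot : p.IsRoot 1 := by
      rw [IsRoot, ← coeffPairing_one]
      exact affine 1 (by funext i; simp [secondDiff]; norm_num)
    have hroot' : (derivative p).IsRoot 1 := by
      rw [IsRoot, ← coeffPairing_natCast]
      exact affine _ (by funext i; simp [secondDiff]; ring)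
    have hdvd : (X - 1) ^ 2 ∣ p := by
      simpa using sq_X_sub_C_dvd_of_isRoot_derivative hroot hroot'
    refine ⟨hdvd, fun k => ?_⟩
    obtain ⟨q, rfl⟩ := hdvd
    rw [mul_divByMonic_cancel_left q hmonic, ← coeffPairing_single, ← secondDiff_ramp,
      ← coeffPairing_sq_X_sub_one_mul]
    refine h _ fun i => ?_
    rw [secondDiff_ramp, Pi.single_apply]
    split_ifs
    exacts [zero_le_one, le_rfl]
  · rintro ⟨⟨q, rfl⟩, hq⟩ φ hφ
    rw [mul_divByMonic_cancel_left q hmonic] at hq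
    rw [coeffPairing_sq_X_sub_one_mul]
    exact coeffPairing_nonneg hφ hq

end OrderedRing

end Polynomial

open Polynomial in
theorem stmt3_general (d : ℕ) (a : ℕ → ℝ) :
    (∀ φ : ℕ → ℝ, (∀ i : ℕ, 0 ≤ φ (i + 2) - 2 * φ (i + 1) + φ i) →
      0 ≤ ∑ i ∈ Finset.range (d + 1), a i * φ i) ↔
    (((X - 1 : ℝ[X]) ^ 2 ∣ ∑ i ∈ Finset.range (d + 1), C (a i) * X ^ i) ∧
     ∀ k : ℕ, 0 ≤ ((∑ i ∈ Finset.range (d + 1), C (a i) * X ^ i) /ₘ (X - 1) ^ 2).coeff k) := by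
  rw [← forall_convex_coeffPairing_nonneg_iff]
  refine forall_congr' fun φ => imp_congr_right fun _ => ?_
  rw [coeffPairing_sum_C_mul_X_pow]

open Polynomial in
/-- ∑ aᵢ φ(i) ≥ 0 for every convex sequence φ iff ∑ aᵢ tⁱ has a double root at 1
and the quotient by (t-1)² has nonnegative coefficients. -/
theorem stmt3 (d : ℕ) (a : ℕ → ℝ) (hne : ∃ i ≤ d, a i ≠ 0) :
    (∀ φ : ℕ → ℝ, (∀ i : ℕ, 0 ≤ φ (i + 2) - 2 * φ (i + 1) + φ i) →
      0 ≤ ∑ i ∈ Finset.range (d + 1), a i * φ i) ↔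
    (((X - 1 : ℝ[X]) ^ 2 ∣ ∑ i ∈ Finset.range (d + 1), C (a i) * X ^ i) ∧
     ∀ k : ℕ, 0 ≤ ((∑ i ∈ Finset.range (d + 1), C (a i) * X ^ i) /ₘ (X - 1) ^ 2).coeff k) :=
  stmt3_general d a
end

section
/- Let μ be a finite signed measure on [a,b], let μ₁(x) = μ([a,x]) and μ₂(x) = ∫_a^x μ₁(t) dt. Then ∫_a^b φ dμ ≥ 0 for every convex function φ on [a,b] if and only if (i) μ([a,b]) = 0, (ii) ∫_a^b x dμ = 0, and (iii) μ₂(x) ≥ 0 for all x ∈ [a,b]. -/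
/-!
Necessity: test the inequality on `±1`, `±x` and the hinges `y ↦ (x - y)⁺`. By Tonelli on the
region `{(y, s) | y ≤ s ≤ x}`, `∫ (x - y)⁺ dμ(y) = ∫_a^x μ([a, s]) ds = μ₂(x)`.

Sufficiency: conditions (i) and (ii) say that `φ ↦ ∫ φ dμ` vanishes on affine functions, and then
(iii) says that it is nonnegative on every hinge `y ↦ (y - c)⁺ = (c - y)⁺ + (y - c)` with
`c ∈ [a, b]`. A continuous convex `φ` is uniformly approximated from above on `[a, b]` by its
piecewise-linear interpolants on fine uniform grids, and such an interpolant is an affine function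
plus a combination of hinges at the grid points whose coefficients, the jumps of the slopes, are
nonnegative by convexity.
-/

open MeasureTheory Set Finset

theorem exists_le_and_le_succ {α : Type*} [LinearOrder α] (t : ℕ → α) {x : α} (h₀ : t 0 ≤ x) :
    ∀ {m : ℕ}, x ≤ t (m + 1) → ∃ j ≤ m, t j ≤ x ∧ x ≤ t (j + 1)
  | 0, h => ⟨0, le_rfl, h₀, h⟩
  | m + 1, h => by
    rcases le_or_gt x (t (m + 1)) with hx | hx
    · obtain ⟨j, hj, hjx⟩ := exists_le_and_le_succ t h₀ hx
      exact ⟨j, hj.trans m.le_succ, hjx⟩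
    · exact ⟨m + 1, le_rfl, hx.le, h⟩

theorem add_sum_mul_sub_eq_of_forall_eq_add_mul (t v s : ℕ → ℝ)
    (hs : ∀ i, v (i + 1) = v i + s i * (t (i + 1) - t i)) (x : ℝ) (j : ℕ) :
    s 0 * x + (v 0 - s 0 * t 0) + ∑ i ∈ range j, (s (i + 1) - s i) * (x - t (i + 1)) =
      v j + s j * (x - t j) := by
  induction j with
  | zero => simp only [range_zero, sum_empty]; ring
  | succ j ih => rw [sum_range_succ, ← add_assoc, ih]; linear_combination -hs j

theorem add_sum_mul_max_sub_eq_of_mem_Icc {t : ℕ → ℝ} (ht : Monotone t) (v s : ℕ → ℝ)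
    (hs : ∀ i, v (i + 1) = v i + s i * (t (i + 1) - t i)) {m j : ℕ} (hjm : j ≤ m) {x : ℝ}
    (hx : x ∈ Icc (t j) (t (j + 1))) :
    s 0 * x + (v 0 - s 0 * t 0) + ∑ i ∈ range m, (s (i + 1) - s i) * max (x - t (i + 1)) 0 =
      v j + s j * (x - t j) := by
  have hleft : ∀ i ∈ range j, max (x - t (i + 1)) 0 = x - t (i + 1) := fun i hi =>
    max_eq_left (sub_nonneg.2 ((ht (mem_range.1 hi)).trans hx.1))
  have hright : ∀ i ∈ Finset.Ico j m, (s (i + 1) - s i) * max (x - t (i + 1)) 0 = 0 :=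
    fun i hi => by
      have hji : j + 1 ≤ i + 1 := by rw [Finset.mem_Ico] at hi; omega
      rw [max_eq_right (sub_nonpos.2 (hx.2.trans (ht hji))), mul_zero]
  rw [← sum_range_add_sum_Ico _ hjm, sum_eq_zero hright, add_zero, sum_congr rfl fun i hi => by
    rw [hleft i hi]]
  exact add_sum_mul_sub_eq_of_forall_eq_add_mul t v s hs x j

theorem ConvexOn.le_add_div_mul_sub {s : Set ℝ} {φ : ℝ → ℝ} (hφ : ConvexOn ℝ s φ) {u v x : ℝ}
    (hu : u ∈ s) (hv : v ∈ s) (hux : u ≤ x) (hxv : x ≤ v) :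
    φ x ≤ φ u + (φ v - φ u) / (v - u) * (x - u) := by
  rcases hux.eq_or_lt with rfl | hux
  · simp
  have hx : x ∈ s := hφ.1.ordConnected.out hu hv ⟨hux.le, hxv⟩
  have hsec := hφ.secant_mono hu hx hv hux.ne' (hux.trans_le hxv).ne' hxv
  rw [div_le_iff₀ (sub_pos.2 hux)] at hsec
  linarith

theorem add_div_mul_sub_le_max (p q : ℝ) {u v x : ℝ} (hux : u ≤ x) (hxv : x ≤ v) :
    p + (q - p) / (v - u) * (x - u) ≤ max p q := by
  have hl₀ : 0 ≤ (x - u) / (v - u) := div_nonneg (sub_nonneg.2 hux) (sub_nonneg.2 (hux.trans hxv))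
  have hl₁ : (x - u) / (v - u) ≤ 1 := div_le_one_of_le₀ (by linarith) (by linarith)
  have := Convex.combo_le_max p q (sub_nonneg.2 hl₁) hl₀ (sub_add_cancel _ _)
  simp only [smul_eq_mul] at this
  linarith [show (q - p) / (v - u) * (x - u) = (q - p) * ((x - u) / (v - u)) by ring]

theorem exists_strictMono_partition {a b δ : ℝ} (hab : a < b) (hδ : 0 < δ) :
    ∃ (m : ℕ) (t : ℕ → ℝ), StrictMono t ∧ t 0 = a ∧ t (m + 1) = b ∧ ∀ i, t (i + 1) - t i < δ := by
  obtain ⟨m, hm⟩ := exists_nat_gt ((b - a) / δ)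
  have hΔδ : (b - a) / (m + 1) < δ := by
    rw [div_lt_iff₀ m.cast_add_one_pos]
    rw [div_lt_iff₀ hδ] at hm
    nlinarith
  have hsucc : ∀ i : ℕ, a + (i + 1 : ℕ) * ((b - a) / (m + 1)) - (a + i * ((b - a) / (m + 1))) =
      (b - a) / (m + 1) := fun i => by push_cast; ring
  refine ⟨m, fun i => a + i * ((b - a) / (m + 1)), strictMono_nat_of_lt_succ fun i => ?_,
    by simp, ?_, fun i => (hsucc i).trans_lt hΔδ⟩
  · linarith [hsucc i, div_pos (sub_pos.2 hab) m.cast_add_one_pos]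
  · push_cast
    field_simp
    ring

theorem ConvexOn.exists_affine_add_sum_hinge_approx {φ : ℝ → ℝ} {a b ε : ℝ}
    (hφc : ContinuousOn φ (Icc a b)) (hφ : ConvexOn ℝ (Icc a b) φ) (hε : 0 < ε) :
    ∃ (α β : ℝ) (m : ℕ) (c w : ℕ → ℝ), (∀ i < m, c i ∈ Icc a b ∧ 0 ≤ w i) ∧
      ∀ x ∈ Icc a b, φ x ≤ α * x + β + ∑ i ∈ range m, w i * max (x - c i) 0 ∧
        α * x + β + ∑ i ∈ range m, w i * max (x - c i) 0 ≤ φ x + ε := by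
  rcases le_or_gt b a with hba | hab
  · refine ⟨0, φ a, 0, 0, 0, by simp, fun x hx => ?_⟩
    obtain rfl : x = a := le_antisymm (hx.2.trans hba) hx.1
    simp [hε.le]
  obtain ⟨δ, hδ, hφδ⟩ := Metric.uniformContinuousOn_iff.1
    (isCompact_Icc.uniformContinuousOn_of_continuous hφc) ε hε
  obtain ⟨m, t, ht, ht_zero, ht_last, ht_gap⟩ := exists_strictMono_partition hab hδ
  have ht_mem : ∀ i ≤ m + 1, t i ∈ Icc a b := fun i hi =>
    ⟨ht_zero ▸ ht.monotone i.zero_le, ht_last ▸ ht.monotone hi⟩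
  set s : ℕ → ℝ := fun i => (φ (t (i + 1)) - φ (t i)) / (t (i + 1) - t i) with hs_def
  have hs : ∀ i, φ (t (i + 1)) = φ (t i) + s i * (t (i + 1) - t i) := fun i => by
    simp only [hs_def]; field_simp [(sub_pos.2 (ht i.lt_succ_self)).ne']; ring
  refine ⟨s 0, φ (t 0) - s 0 * t 0, m, fun i => t (i + 1), fun i => s (i + 1) - s i,
    fun i hi => ⟨ht_mem _ (by omega), sub_nonneg.2 ?_⟩, fun x hx => ?_⟩
  · exact hφ.slope_mono_adjacent (ht_mem i (by omega)) (ht_mem (i + 2) (by omega))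
      (ht i.lt_succ_self) (ht (i + 1).lt_succ_self)
  obtain ⟨j, hjm, hjx⟩ := exists_le_and_le_succ t (ht_zero ▸ hx.1) (ht_last ▸ hx.2)
  rw [add_sum_mul_max_sub_eq_of_mem_Icc ht.monotone (fun i => φ (t i)) s hs hjm hjx]
  have hclose : ∀ i ≤ m + 1, |t i - x| < δ → φ (t i) ≤ φ x + ε := fun i hi hti => by
    have := hφδ _ (ht_mem i hi) x hx (by rwa [Real.dist_eq])
    rw [Real.dist_eq, abs_lt] at this
    linarith
  have hgap := ht_gap j
  refine ⟨hφ.le_add_div_mul_sub (ht_mem j (by omega)) (ht_mem (j + 1) (by omega)) hjx.1 hjx.2,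
    (add_div_mul_sub_le_max _ _ hjx.1 hjx.2).trans (max_le ?_ ?_)⟩
  · exact hclose j (by omega) (abs_lt.2 ⟨by linarith [hjx.2], by linarith [hjx.1]⟩)
  · exact hclose (j + 1) (by omega) (abs_lt.2 ⟨by linarith [hjx.2], by linarith [hjx.1]⟩)

theorem max_sub_zero_eq_max_sub_zero_add (y c : ℝ) : max (y - c) 0 = max (c - y) 0 + (y - c) := by
  rcases le_total y c with h | h
  · rw [max_eq_right (by linarith), max_eq_left (by linarith)]; ring
  · rw [max_eq_left (by linarith), max_eq_right (by linarith)]; ring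

section IntegralIdentities

variable {μ : Measure ℝ} [IsFiniteMeasure μ]

theorem integral_affine_add_sum {ι : Type*} (s : Finset ι) (α β : ℝ) (w : ι → ℝ)
    {g : ι → ℝ → ℝ} (hid : Integrable (fun y => y) μ) (hg : ∀ i ∈ s, Integrable (g i) μ) :
    ∫ y, (α * y + β + ∑ i ∈ s, w i * g i y) ∂μ =
      α * ∫ y, y ∂μ + β * μ.real univ + ∑ i ∈ s, w i * ∫ y, g i y ∂μ := by
  have hαy : Integrable (fun y => α * y) μ := hid.const_mul α
  have haff : Integrable (fun y => α * y + β) μ := hαy.add (integrable_const β)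
  have hsum : Integrable (fun y => ∑ i ∈ s, w i * g i y) μ :=
    integrable_finsetSum _ fun i hi => (hg i hi).const_mul _
  rw [integral_add haff hsum, integral_add hαy (integrable_const β),
    integral_const_mul, integral_const, integral_finsetSum _ fun i hi => (hg i hi).const_mul _,
    smul_eq_mul, mul_comm β]
  simp only [integral_const_mul]

theorem integral_max_sub_zero_eq (hid : Integrable (fun y => y) μ) (c : ℝ) :
    ∫ y, max (y - c) 0 ∂μ = ∫ y, max (c - y) 0 ∂μ + (∫ y, y ∂μ - c * μ.real univ) := by
  have hpos : Integrable (fun y => max (c - y) 0) μ := ((integrable_const c).sub hid).pos_part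
  have hsub : Integrable (fun y => y - c) μ := hid.sub (integrable_const c)
  simp_rw [max_sub_zero_eq_max_sub_zero_add _ c]
  rw [integral_add hpos hsub, integral_sub hid (integrable_const c), integral_const, smul_eq_mul,
    mul_comm]

end IntegralIdentities

section KernelIdentity

theorem lintegral_ofReal_sub_eq_setLIntegral_measure_Iic (μ : Measure ℝ) [SFinite μ] (t : ℝ) :
    ∫⁻ y, ENNReal.ofReal (t - y) ∂μ = ∫⁻ s in Iic t, μ (Iic s) := by
  have hK : MeasurableSet {p : ℝ × ℝ | p.1 ≤ p.2} := measurableSet_le measurable_fst measurable_snd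
  calc ∫⁻ y, ENNReal.ofReal (t - y) ∂μ
      = ∫⁻ y, volume.restrict (Iic t) (Prod.mk y ⁻¹' {p : ℝ × ℝ | p.1 ≤ p.2}) ∂μ := by
        congr 1 with y
        rw [Measure.restrict_apply' measurableSet_Iic]
        exact Real.volume_Icc.symm
    _ = ∫⁻ s in Iic t, μ ((fun y => (y, s)) ⁻¹' {p : ℝ × ℝ | p.1 ≤ p.2}) := by
        rw [← Measure.prod_apply hK, Measure.prod_apply_symm hK]
    _ = ∫⁻ s in Iic t, μ (Iic s) := rfl

theorem setLIntegral_measure_Iic_eq (μ : Measure ℝ) {a t : ℝ} (ha : μ (Iio a) = 0) (hat : a ≤ t) :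
    ∫⁻ s in Iic t, μ (Iic s) = ∫⁻ s in Ioc a t, μ (Icc a s) := by
  have hIcc : ∀ s, μ (Iic s) = μ (Icc a s) := fun s => by
    rw [← Ici_inter_Iic, inter_comm, measure_inter_conull (by rwa [compl_Ici])]
  have hIio : ∫⁻ s in Iio a, μ (Icc a s) = 0 :=
    setLIntegral_eq_zero measurableSet_Iio fun s hs => by simp [Icc_eq_empty_of_lt (mem_Iio.1 hs)]
  rw [← Iio_union_Icc_eq_Iic hat,
    lintegral_union measurableSet_Icc ((Iio_disjoint_Ici le_rfl).mono_right Icc_subset_Ici_self),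
    setLIntegral_congr Ioc_ae_eq_Icc.symm]
  simp only [hIcc, hIio, zero_add]

theorem monotone_measure_Icc (μ : Measure ℝ) (a : ℝ) : Monotone fun s => μ (Icc a s) :=
  fun _ _ h => measure_mono (Icc_subset_Icc_right h)

theorem integral_max_sub_zero_eq_intervalIntegral (μ : Measure ℝ) [IsFiniteMeasure μ] {a t : ℝ}
    (ha : μ (Iio a) = 0) (hat : a ≤ t) :
    ∫ y, max (t - y) 0 ∂μ = ∫ s in a..t, (μ (Icc a s)).toReal := by
  rw [intervalIntegral.integral_of_le hat,
    integral_toReal (monotone_measure_Icc μ a).measurable.aemeasurable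
      (.of_forall fun _ => measure_lt_top μ _),
    ← setLIntegral_measure_Iic_eq μ ha hat, ← lintegral_ofReal_sub_eq_setLIntegral_measure_Iic,
    ← integral_toReal (by fun_prop) (.of_forall fun _ => ENNReal.ofReal_lt_top)]
  simp only [ENNReal.toReal_ofReal']

theorem intervalIntegrable_toReal_measure_Icc (μ : Measure ℝ) [IsFiniteMeasure μ] (a x y : ℝ) :
    IntervalIntegrable (fun t => (μ (Icc a t)).toReal) volume x y :=
  Monotone.intervalIntegrable fun _ _ h =>
    ENNReal.toReal_mono (measure_ne_top μ _) (monotone_measure_Icc μ a h)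

end KernelIdentity

section SupportedOnIcc

variable {a b : ℝ} {μ : Measure ℝ}

theorem integrable_of_continuousOn_Icc [IsFiniteMeasure μ] (hμ : μ (Icc a b)ᶜ = 0) {g : ℝ → ℝ}
    (hg : ContinuousOn g (Icc a b)) : Integrable g μ := by
  rw [← Measure.restrict_eq_self_of_ae_mem (ae_iff.2 hμ)]
  exact hg.integrableOn_compact isCompact_Icc

theorem measureReal_univ_eq_of_compl_Icc (hμ : μ (Icc a b)ᶜ = 0) :
    μ.real univ = (μ (Icc a b)).toReal := by
  rw [measureReal_def, ← measure_inter_conull hμ, univ_inter]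

theorem measure_Iio_eq_zero_of_compl_Icc (hμ : μ (Icc a b)ᶜ = 0) : μ (Iio a) = 0 :=
  measure_mono_null (fun y (hy : y < a) hmem => hy.not_ge hmem.1 : Iio a ⊆ (Icc a b)ᶜ) hμ

end SupportedOnIcc

theorem integral_eq_of_convexOn_of_concaveOn {a b : ℝ} {μp μm : Measure ℝ}
    (H : ∀ φ : ℝ → ℝ, Continuous φ → ConvexOn ℝ (Icc a b) φ → 0 ≤ ∫ x, φ x ∂μp - ∫ x, φ x ∂μm)
    {g : ℝ → ℝ} (hc : Continuous g) (hvex : ConvexOn ℝ (Icc a b) g)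
    (hcave : ConcaveOn ℝ (Icc a b) g) : ∫ x, g x ∂μp = ∫ x, g x ∂μm := by
  have h₁ := H g hc hvex
  have h₂ := H (fun x => -g x) hc.neg hcave.neg
  rw [integral_neg, integral_neg] at h₂
  linarith

section SignedPair

variable {a b : ℝ} {μp μm : Measure ℝ} [IsFiniteMeasure μp] [IsFiniteMeasure μm]

theorem intervalIntegral_measure_Icc_sub_eq (hp : μp (Icc a b)ᶜ = 0) (hm : μm (Icc a b)ᶜ = 0)
    {x : ℝ} (hax : a ≤ x) :
    ∫ t in a..x, ((μp (Icc a t)).toReal - (μm (Icc a t)).toReal) =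
      ∫ y, max (x - y) 0 ∂μp - ∫ y, max (x - y) 0 ∂μm := by
  rw [intervalIntegral.integral_sub (intervalIntegrable_toReal_measure_Icc μp a a x)
      (intervalIntegrable_toReal_measure_Icc μm a a x),
    integral_max_sub_zero_eq_intervalIntegral μp (measure_Iio_eq_zero_of_compl_Icc hp) hax,
    integral_max_sub_zero_eq_intervalIntegral μm (measure_Iio_eq_zero_of_compl_Icc hm) hax]

theorem sub_integral_max_sub_zero_eq (hp : μp (Icc a b)ᶜ = 0) (hm : μm (Icc a b)ᶜ = 0)
    (hmass : μp.real univ = μm.real univ) (hmean : ∫ y, y ∂μp = ∫ y, y ∂μm) (c : ℝ) :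
    ∫ y, max (y - c) 0 ∂μp - ∫ y, max (y - c) 0 ∂μm =
      ∫ y, max (c - y) 0 ∂μp - ∫ y, max (c - y) 0 ∂μm := by
  rw [integral_max_sub_zero_eq (integrable_of_continuousOn_Icc hp continuousOn_id),
    integral_max_sub_zero_eq (integrable_of_continuousOn_Icc hm continuousOn_id), hmass, hmean]
  ring

theorem sub_integral_nonneg_of_forall_approx (hp : μp (Icc a b)ᶜ = 0) (hm : μm (Icc a b)ᶜ = 0)
    {φ : ℝ → ℝ} (hφ : ContinuousOn φ (Icc a b))
    (happrox : ∀ ε > 0, ∃ f : ℝ → ℝ, ContinuousOn f (Icc a b) ∧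
      0 ≤ ∫ x, f x ∂μp - ∫ x, f x ∂μm ∧ ∀ x ∈ Icc a b, φ x ≤ f x ∧ f x ≤ φ x + ε) :
    0 ≤ ∫ x, φ x ∂μp - ∫ x, φ x ∂μm := by
  refine le_of_forall_pos_le_add fun ε hε => ?_
  set M := μp.real univ
  have hM : 0 ≤ M := measureReal_nonneg
  obtain ⟨f, hfc, hf, hfφ⟩ := happrox (ε / (M + 1)) (by positivity)
  have hp_le : ∫ x, (f x - ε / (M + 1)) ∂μp ≤ ∫ x, φ x ∂μp := by
    refine integral_mono_ae ((integrable_of_continuousOn_Icc hp hfc).sub (integrable_const _))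
      (integrable_of_continuousOn_Icc hp hφ) ?_
    filter_upwards [ae_iff.2 hp] with x hx
    linarith [(hfφ x hx).2]
  have hm_le : ∫ x, φ x ∂μm ≤ ∫ x, f x ∂μm := by
    refine integral_mono_ae (integrable_of_continuousOn_Icc hm hφ)
      (integrable_of_continuousOn_Icc hm hfc) ?_
    filter_upwards [ae_iff.2 hm] with x hx
    exact (hfφ x hx).1
  rw [integral_sub (integrable_of_continuousOn_Icc hp hfc) (integrable_const _), integral_const,
    smul_eq_mul] at hp_le
  have hεM : M * (ε / (M + 1)) ≤ ε := by
    rw [mul_div_assoc', div_le_iff₀ (by positivity)]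
    nlinarith
  linarith

theorem sub_integral_affine_add_sum_nonneg (hp : μp (Icc a b)ᶜ = 0) (hm : μm (Icc a b)ᶜ = 0)
    (hmass : μp.real univ = μm.real univ) (hmean : ∫ y, y ∂μp = ∫ y, y ∂μm)
    {ι : Type*} (s : Finset ι) (α β : ℝ) {w : ι → ℝ} {g : ι → ℝ → ℝ}
    (hg : ∀ i ∈ s, ContinuousOn (g i) (Icc a b))
    (hgw : ∀ i ∈ s, 0 ≤ w i ∧ 0 ≤ ∫ y, g i y ∂μp - ∫ y, g i y ∂μm) :
    0 ≤ ∫ y, (α * y + β + ∑ i ∈ s, w i * g i y) ∂μp -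
      ∫ y, (α * y + β + ∑ i ∈ s, w i * g i y) ∂μm := by
  rw [integral_affine_add_sum s α β w (integrable_of_continuousOn_Icc hp continuousOn_id)
      fun i hi => integrable_of_continuousOn_Icc hp (hg i hi),
    integral_affine_add_sum s α β w (integrable_of_continuousOn_Icc hm continuousOn_id)
      fun i hi => integrable_of_continuousOn_Icc hm (hg i hi),
    hmass, hmean, add_sub_add_left_eq_sub, ← sum_sub_distrib]
  exact sum_nonneg fun i hi => by rw [← mul_sub]; exact mul_nonneg (hgw i hi).1 (hgw i hi).2

end SignedPair

open MeasureTheory in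
theorem stmt4_general (a b : ℝ)
    (μp μm : Measure ℝ) [IsFiniteMeasure μp] [IsFiniteMeasure μm]
    (hp : μp (Set.Icc a b)ᶜ = 0) (hm : μm (Set.Icc a b)ᶜ = 0) :
    (∀ φ : ℝ → ℝ, Continuous φ → ConvexOn ℝ (Set.Icc a b) φ →
        0 ≤ (∫ x, φ x ∂μp) - ∫ x, φ x ∂μm) ↔
    ((μp (Set.Icc a b)).toReal = (μm (Set.Icc a b)).toReal ∧
     (∫ x, x ∂μp) - (∫ x, x ∂μm) = 0 ∧
     ∀ x ∈ Set.Icc a b,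
       0 ≤ ∫ t in a..x, ((μp (Set.Icc a t)).toReal - (μm (Set.Icc a t)).toReal)) := by
  rw [← measureReal_univ_eq_of_compl_Icc hp, ← measureReal_univ_eq_of_compl_Icc hm, sub_eq_zero]
  have hI : Convex ℝ (Icc a b) := convex_Icc a b
  constructor
  · intro H
    have hmass := integral_eq_of_convexOn_of_concaveOn H continuous_const
      (convexOn_const 1 hI) (concaveOn_const 1 hI)
    refine ⟨by simpa using hmass,
      integral_eq_of_convexOn_of_concaveOn H continuous_id (convexOn_id hI) (concaveOn_id hI),
      fun x hx => ?_⟩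
    rw [intervalIntegral_measure_Icc_sub_eq hp hm hx.1]
    exact H _ (by fun_prop)
      (((convexOn_const x hI).sub (concaveOn_id hI)).sup (convexOn_const 0 hI))
  · rintro ⟨hmass, hmean, hhinge⟩ φ hφ hconv
    refine sub_integral_nonneg_of_forall_approx hp hm hφ.continuousOn fun ε hε => ?_
    obtain ⟨α, β, m, c, w, hcw, hf⟩ := hconv.exists_affine_add_sum_hinge_approx hφ.continuousOn hε
    refine ⟨_, by fun_prop, sub_integral_affine_add_sum_nonneg hp hm hmass hmean (range m) α β
      (fun i _ => by fun_prop) fun i hi => ⟨(hcw i (mem_range.1 hi)).2, ?_⟩, hf⟩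
    have hc := (hcw i (mem_range.1 hi)).1
    rw [sub_integral_max_sub_zero_eq hp hm hmass hmean,
      ← intervalIntegral_measure_Icc_sub_eq hp hm hc.1]
    exact hhinge _ hc

open MeasureTheory in
/-- Karlin–Novikoff, continuous version: for a finite signed measure (written as μp - μm)
supported on [a,b], ∫ φ dμ ≥ 0 for all convex φ iff the three moment/positivity conditions hold. -/
theorem stmt4 (a b : ℝ) (hab : a ≤ b)
    (μp μm : Measure ℝ) [IsFiniteMeasure μp] [IsFiniteMeasure μm]
    (hp : μp (Set.Icc a b)ᶜ = 0) (hm : μm (Set.Icc a b)ᶜ = 0) :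
    (∀ φ : ℝ → ℝ, Continuous φ → ConvexOn ℝ (Set.Icc a b) φ →
        0 ≤ (∫ x, φ x ∂μp) - ∫ x, φ x ∂μm) ↔
    ((μp (Set.Icc a b)).toReal = (μm (Set.Icc a b)).toReal ∧
     (∫ x, x ∂μp) - (∫ x, x ∂μm) = 0 ∧
     ∀ x ∈ Set.Icc a b,
       0 ≤ ∫ t in a..x, ((μp (Set.Icc a t)).toReal - (μm (Set.Icc a t)).toReal)) :=
  stmt4_general a b μp μm hp hm
end

section
/- Let f be a real polynomial that is strictly positive on (0,∞). Then there exist real polynomials g and h, with all coefficients of g and h nonnegative and g not identically zero, such that f·g = h. -/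
/-!
Over `ℝ` every monic irreducible factor of `f` is `X + r` or `X ^ 2 + b X + c` with `b ^ 2 < 4 c`,
and since `f` has no root on `(0, ∞)`, a linear factor has `r ≥ 0`. Polynomials admitting a
nonzero multiplier with nonnegative coefficients that makes all coefficients nonnegative are
closed under products, so it suffices to treat the quadratic factors with `b < 0`. For those,
`(X ^ 2 + b X + c) (X ^ 2 - b X + c) = Q (X ^ 2)` with `Q = Y ^ 2 + (2 c - b ^ 2) Y + c ^ 2`: the
roots of `Q` are the squares of those of the original quadratic, so their argument doubles, and
after finitely many steps the middle coefficient becomes nonnegative.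
-/

open Polynomial

namespace Polynomial

section NonnegCoeffs

variable (R : Type*) [CommSemiring R] [PartialOrder R] [IsOrderedRing R]

def nonnegCoeffs : Subsemiring R[X] where
  carrier := {p | ∀ k, 0 ≤ p.coeff k}
  mul_mem' {p q} hp hq k := by
    rw [coeff_mul]
    exact Finset.sum_nonneg fun x _ => mul_nonneg (hp _) (hq _)
  one_mem' k := by
    rw [coeff_one]
    split_ifs <;> simp
  add_mem' hp hq k := by
    rw [coeff_add]
    exact add_nonneg (hp k) (hq k)
  zero_mem' k := by simp

variable {R}

lemma C_mem_nonnegCoeffs {a : R} (ha : 0 ≤ a) : C a ∈ nonnegCoeffs R := fun k => by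
  rw [coeff_C]
  split_ifs <;> simp [ha]

lemma X_mem_nonnegCoeffs : (X : R[X]) ∈ nonnegCoeffs R := fun k => by
  rw [coeff_X]
  split_ifs <;> simp

lemma quadratic_mem_nonnegCoeffs {b c : R} (hb : 0 ≤ b) (hc : 0 ≤ c) :
    X ^ 2 + C b * X + C c ∈ nonnegCoeffs R :=
  add_mem (add_mem (pow_mem X_mem_nonnegCoeffs 2)
    (mul_mem (C_mem_nonnegCoeffs hb) X_mem_nonnegCoeffs)) (C_mem_nonnegCoeffs hc)

lemma expand_mem_nonnegCoeffs {n : ℕ} (hn : 0 < n) {p : R[X]} (hp : p ∈ nonnegCoeffs R) :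
    expand R n p ∈ nonnegCoeffs R := fun k => by
  rw [coeff_expand hn]
  split_ifs
  exacts [hp _, le_rfl]

def HasNonnegCoeffMultiple (f : R[X]) : Prop :=
  ∃ g ∈ nonnegCoeffs R, g ≠ 0 ∧ f * g ∈ nonnegCoeffs R

namespace HasNonnegCoeffMultiple

lemma of_mem [Nontrivial R] {f : R[X]} (hf : f ∈ nonnegCoeffs R) : HasNonnegCoeffMultiple f :=
  ⟨1, one_mem _, one_ne_zero, by rwa [mul_one]⟩

lemma mul [NoZeroDivisors R] {f₁ f₂ : R[X]} (h₁ : HasNonnegCoeffMultiple f₁)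
    (h₂ : HasNonnegCoeffMultiple f₂) : HasNonnegCoeffMultiple (f₁ * f₂) := by
  obtain ⟨g₁, hg₁, hg₁0, hfg₁⟩ := h₁
  obtain ⟨g₂, hg₂, hg₂0, hfg₂⟩ := h₂
  refine ⟨g₁ * g₂, mul_mem hg₁ hg₂, mul_ne_zero hg₁0 hg₂0, ?_⟩
  rw [mul_mul_mul_comm]
  exact mul_mem hfg₁ hfg₂

lemma of_mul_right [NoZeroDivisors R] {f q : R[X]} (h : HasNonnegCoeffMultiple (f * q))
    (hq : q ∈ nonnegCoeffs R) (hq0 : q ≠ 0) : HasNonnegCoeffMultiple f := by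
  obtain ⟨g, hg, hg0, hfg⟩ := h
  exact ⟨q * g, mul_mem hq hg, mul_ne_zero hq0 hg0, by rwa [← mul_assoc]⟩

lemma expand {n : ℕ} (hn : 0 < n) {f : R[X]} (h : HasNonnegCoeffMultiple f) :
    HasNonnegCoeffMultiple (Polynomial.expand R n f) := by
  obtain ⟨g, hg, hg0, hfg⟩ := h
  refine ⟨Polynomial.expand R n g, expand_mem_nonnegCoeffs hn hg, (expand_ne_zero hn).mpr hg0, ?_⟩
  rw [← map_mul]
  exact expand_mem_nonnegCoeffs hn hfg

end HasNonnegCoeffMultiple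

end NonnegCoeffs

lemma quadratic_mul_quadratic_neg {R : Type*} [CommRing R] (b c : R) :
    (X ^ 2 + C b * X + C c) * (X ^ 2 - C b * X + C c) =
      expand R 2 (X ^ 2 + C (2 * c - b ^ 2) * X + C (c ^ 2)) := by
  simp only [map_add, map_sub, map_mul, map_pow, map_ofNat, expand_X, expand_C]
  ring

section OrderedField

variable {K : Type*} [Field K] [LinearOrder K] [IsStrictOrderedRing K]

/-- Passing from `X ^ 2 + b X + c` to `Q` replaces `ρ = b ^ 2 / (4 c)` by `(2 ρ - 1) ^ 2`, which at
least doubles `1 - ρ` as long as `ρ > 1 / 2`; so `n` bounds the number of steps. -/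
lemma hasNonnegCoeffMultiple_quadratic_of_le_two_pow (n : ℕ) {b c : K} (hc : 0 < c)
    (h : 4 * c ≤ 2 ^ n * (4 * c - b ^ 2)) :
    HasNonnegCoeffMultiple (X ^ 2 + C b * X + C c) := by
  induction n generalizing b c with
  | zero =>
    have hb : b = 0 := by nlinarith [sq_nonneg b]
    exact .of_mem (quadratic_mem_nonnegCoeffs hb.ge hc.le)
  | succ n ih =>
    rcases le_or_gt 0 b with hb | hb
    · exact .of_mem (quadratic_mem_nonnegCoeffs hb hc.le)
    have hsquare : HasNonnegCoeffMultiple (X ^ 2 + C (2 * c - b ^ 2) * X + C (c ^ 2)) := by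
      rcases le_or_gt (b ^ 2) (2 * c) with hb2 | hb2
      · exact .of_mem (quadratic_mem_nonnegCoeffs (by linarith) (sq_nonneg c))
      refine ih (by positivity) ?_
      have hdisc : 0 ≤ 4 * c - b ^ 2 := by
        have : (0 : K) < 2 ^ (n + 1) := by positivity
        nlinarith
      calc 4 * c ^ 2 = c * (4 * c) := by ring
        _ ≤ c * (2 ^ (n + 1) * (4 * c - b ^ 2)) := by gcongr
        _ = 2 ^ n * (2 * c) * (4 * c - b ^ 2) := by ring
        _ ≤ 2 ^ n * b ^ 2 * (4 * c - b ^ 2) := by gcongr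
        _ = 2 ^ n * (4 * c ^ 2 - (2 * c - b ^ 2) ^ 2) := by ring
    have hmul := hsquare.expand two_pos
    rw [← quadratic_mul_quadratic_neg] at hmul
    exact hmul.of_mul_right
      (by simpa [sub_eq_add_neg] using quadratic_mem_nonnegCoeffs (neg_nonneg.mpr hb.le) hc.le)
      (isMonicOfDegree_sub_add_two b c).ne_zero

lemma hasNonnegCoeffMultiple_quadratic [Archimedean K] {b c : K} (h : b ^ 2 < 4 * c) :
    HasNonnegCoeffMultiple (X ^ 2 + C b * X + C c) := by
  have hc : 0 < c := by nlinarith [sq_nonneg b]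
  obtain ⟨n, hn⟩ := pow_unbounded_of_one_lt (4 * c / (4 * c - b ^ 2)) one_lt_two
  rw [div_lt_iff₀ (by linarith)] at hn
  exact hasNonnegCoeffMultiple_quadratic_of_le_two_pow n hc hn.le

end OrderedField

lemma sq_lt_four_mul_of_irreducible_quadratic {b c : ℝ}
    (h : Irreducible (X ^ 2 + C b * X + C c)) : b ^ 2 < 4 * c := by
  by_contra! hle
  have hdisc : discrim 1 b c = √(discrim 1 b c) * √(discrim 1 b c) :=
    (Real.mul_self_sqrt (by rw [discrim]; linarith)).symm
  obtain ⟨x, hx⟩ := exists_quadratic_eq_zero one_ne_zero ⟨_, hdisc⟩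
  have hroot : (X ^ 2 + C b * X + C c).IsRoot x := by
    simp only [IsRoot, eval_add, eval_pow, eval_mul, eval_X, eval_C]
    linear_combination hx
  have hdeg := natDegree_eq_of_degree_eq_some (degree_eq_one_of_irreducible_of_root h hroot)
  rw [(isMonicOfDegree_add_add_two b c).natDegree_eq] at hdeg
  exact absurd hdeg (by norm_num)

lemma Monic.pos_and_hasNonnegCoeffMultiple_of_irreducible {p : ℝ[X]} (hm : p.Monic)
    (hi : Irreducible p) (hroot : ∀ x, 0 < x → ¬p.IsRoot x) :
    (∀ x, 0 < x → 0 < p.eval x) ∧ HasNonnegCoeffMultiple p := by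
  have hdeg : IsMonicOfDegree p p.natDegree := ⟨rfl, hm⟩
  have hpos := hi.natDegree_pos
  have hle := hi.natDegree_le_two
  interval_cases p.natDegree
  · obtain ⟨r, rfl⟩ := isMonicOfDegree_one_iff.mp hdeg
    have hr : 0 ≤ r := by
      by_contra! hr
      exact hroot (-r) (by linarith) (by simp)
    refine ⟨fun x hx => by simp only [eval_add, eval_X, eval_C]; linarith, .of_mem ?_⟩
    exact add_mem X_mem_nonnegCoeffs (C_mem_nonnegCoeffs hr)
  · obtain ⟨b, c, rfl⟩ := isMonicOfDegree_two_iff.mp hdeg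
    have hbc := sq_lt_four_mul_of_irreducible_quadratic hi
    refine ⟨fun x _ => ?_, hasNonnegCoeffMultiple_quadratic hbc⟩
    simp only [eval_add, eval_pow, eval_mul, eval_X, eval_C]
    nlinarith [sq_nonneg (2 * x + b)]

theorem hasNonnegCoeffMultiple_of_eval_pos {f : ℝ[X]} (hf : ∀ x, 0 < x → 0 < f.eval x) :
    HasNonnegCoeffMultiple f := by
  induction hd : f.natDegree using Nat.strong_induction_on generalizing f with
  | _ n ih =>
  rcases Nat.eq_zero_or_pos n with rfl | hn
  · rw [eq_C_of_natDegree_eq_zero hd] at hf ⊢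
    exact .of_mem (C_mem_nonnegCoeffs (by simpa using (hf 1 one_pos).le))
  obtain ⟨p, hpm, hpi, q, rfl⟩ :=
    exists_monic_irreducible_factor f (not_isUnit_of_natDegree_pos f (hd ▸ hn))
  obtain ⟨hp_pos, hp⟩ := hpm.pos_and_hasNonnegCoeffMultiple_of_irreducible hpi
    fun x hx hroot => by simpa [hroot.eq_zero] using hf x hx
  have hq_pos : ∀ x, 0 < x → 0 < q.eval x := fun x hx =>
    pos_of_mul_pos_right (by simpa using hf x hx) (hp_pos x hx).le
  have hq0 : q ≠ 0 := fun hq => by simpa [hq] using hq_pos 1 one_pos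
  refine hp.mul (ih q.natDegree ?_ hq_pos rfl)
  rw [← hd, natDegree_mul hpi.ne_zero hq0]
  linarith [hpi.natDegree_pos]

end Polynomial

/-- Pólya's lemma: a real polynomial strictly positive on (0,∞) becomes a polynomial with
nonnegative coefficients after multiplication by a suitable nonzero polynomial with
nonnegative coefficients. -/
theorem stmt12 (f : Polynomial ℝ) (hf : ∀ x : ℝ, 0 < x → 0 < f.eval x) :
    ∃ g h : Polynomial ℝ, g ≠ 0 ∧ (∀ k, 0 ≤ g.coeff k) ∧ (∀ k, 0 ≤ h.coeff k) ∧
      f * g = h := by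
  obtain ⟨g, hg, hg0, hfg⟩ := hasNonnegCoeffMultiple_of_eval_pos hf
  exact ⟨g, f * g, hg0, hg, hfg, rfl⟩
end
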